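/- arXiv:1908.10183 — 2 statements merged into one kernel-verified Lean document; each statement's English description precedes it below -/
import Mathlib

section
/- Let U(s,t) := (1/t)∫_{[t,2t]} K(s,r) dr with K(s,r) := (1/√π)(χ_{s>r}(s-r)^{-1/2} − χ_{s>0} s^{-1/2}), and Q(s,t) := s ∂U/∂s(s,t). There exists a universal constant C > 0 such that for all t > 0, ∫_{(0,∞)} |Q(s,t)| ds ≤ C√t. -/
/-!
The kernel `K` is homogeneous of degree `-1/2` under `(s, r) ↦ (a s, a r)`, hence
`Q (a s) (a t) = a^(-1/2) Q s t`, and the substitution `s = t u` turns the integral into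
`√t · ∫ |Q u 1| du`. At `t = 1` everything is explicit:
`U s 1 = π^(-1/2) (2 √(s-1)₊ - 2 √(s-2)₊ - s^(-1/2))`, so `Q (·) 1` has only integrable
singularities at `0, 1, 2`, while for `s ≥ 3` the terms `s ((s-1)^(-1/2) - (s-2)^(-1/2))` and
`s^(-1/2) / 2` cancel up to `O(s^(-3/2))`.
-/

open MeasureTheory Real

noncomputable def K (s r : ℝ) : ℝ :=
  (1 / Real.sqrt π) *
    ((if r < s then (s - r) ^ (-(1:ℝ)/2) else 0) - (if 0 < s then s ^ (-(1:ℝ)/2) else 0))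

noncomputable def U (s t : ℝ) : ℝ :=
  (1 / t) * ∫ r in Set.Icc t (2 * t), K s r

noncomputable def Q (s t : ℝ) : ℝ := s * deriv (fun s' => U s' t) s

open Set

-- For `x < 0` both sides vanish (Mathlib's `x ^ y` then carries a factor `cos (π y)`); this is
-- what lets the indicators in `K` be dropped.
lemma rpow_neg_half_eq_inv_sqrt (x : ℝ) : x ^ (-(1:ℝ)/2) = (√x)⁻¹ := by
  rcases lt_trichotomy x 0 with hx | rfl | hx
  · rw [rpow_def_of_neg hx, show -(1:ℝ)/2 * π = -(π/2) by ring, cos_neg, cos_pi_div_two,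
      mul_zero, sqrt_eq_zero'.mpr hx.le, inv_zero]
  · simp
  · rw [show -(1:ℝ)/2 = -(1/2) by ring, rpow_neg hx.le, sqrt_eq_rpow]

lemma rpow_neg_three_halves_eq_inv_sqrt_pow {x : ℝ} (hx : 0 ≤ x) :
    x ^ (-(3:ℝ)/2) = (√x ^ 3)⁻¹ := by
  rw [show -(3:ℝ)/2 = -(1/2) * (3:ℕ) by norm_num, rpow_mul hx, rpow_neg hx, ← sqrt_eq_rpow,
    rpow_natCast, inv_pow]

lemma inv_sqrt_pi_le_one : (√π)⁻¹ ≤ 1 :=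
  inv_le_one_of_one_le₀ (one_le_sqrt.mpr (by linarith [pi_gt_three]))

lemma intervalIntegrable_inv_sqrt (a b : ℝ) :
    IntervalIntegrable (fun x => (√x)⁻¹) volume a b := by
  simpa only [rpow_neg_half_eq_inv_sqrt] using
    intervalIntegral.intervalIntegrable_rpow' (a := a) (b := b) (by norm_num : -1 < -(1:ℝ)/2)

lemma integrableOn_inv_sqrt_sub (c a b : ℝ) :
    IntegrableOn (fun x => (√(x - c))⁻¹) (Ioc a b) := by
  have h := (intervalIntegrable_inv_sqrt (a - c) (b - c)).comp_sub_right c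
  simp only [sub_add_cancel] at h
  exact h.def'.mono_set Ioc_subset_uIoc

lemma integral_inv_sqrt (a b : ℝ) : ∫ x in a..b, (√x)⁻¹ = 2 * (√b - √a) := by
  have h : (fun x : ℝ => (√x)⁻¹) = fun x => x ^ (-(1:ℝ)/2) :=
    funext fun x => (rpow_neg_half_eq_inv_sqrt x).symm
  rw [h, integral_rpow (Or.inl (by norm_num)), sqrt_eq_rpow, sqrt_eq_rpow]
  norm_num
  ring

lemma hasDerivAt_two_mul_sqrt_sub {c x : ℝ} (hx : x ≠ c) :
    HasDerivAt (fun y => 2 * √(y - c)) (√(x - c))⁻¹ x := by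
  have h := ((hasDerivAt_id' x).sub_const c).sqrt (sub_ne_zero.mpr hx)
  exact (h.const_mul 2).congr_deriv (by field_simp)

lemma hasDerivAt_inv_sqrt {x : ℝ} (hx : 0 < x) :
    HasDerivAt (fun y => (√y)⁻¹) (-(√x)⁻¹ / (2 * x)) x := by
  refine ((hasDerivAt_sqrt hx.ne').inv (sqrt_pos.mpr hx).ne').congr_deriv ?_
  rw [sq_sqrt hx.le]
  field_simp

lemma lintegral_Ioi_zero_eq_mul_comp_mul_left (g : ℝ → ENNReal) {a : ℝ} (ha : 0 < a) :
    ∫⁻ x in Ioi 0, g x = ENNReal.ofReal a * ∫⁻ x in Ioi 0, g (a * x) := by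
  have hmap := (Homeomorph.mulLeft₀ a ha.ne').measurableEmbedding.lintegral_map
    (μ := volume) ((Ioi 0).indicator g)
  simp only [Homeomorph.coe_mulLeft₀, Real.map_volume_mul_left ha.ne',
    lintegral_smul_measure] at hmap
  have hind : (Ioi (0:ℝ)).indicator (fun x => g (a * x))
      = fun x => (Ioi 0).indicator g (a * x) := by
    ext x
    simp only [indicator, mem_Ioi, mul_pos_iff_of_pos_left ha]
  rw [← lintegral_indicator measurableSet_Ioi, ← lintegral_indicator measurableSet_Ioi, hind,
    ← hmap, abs_of_pos (inv_pos.mpr ha), smul_eq_mul, ← mul_assoc, ← ENNReal.ofReal_mul ha.le,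
    mul_inv_cancel₀ ha.ne', ENNReal.ofReal_one, one_mul]

lemma K_eq (s r : ℝ) : K s r = (√π)⁻¹ * ((√(s - r))⁻¹ - (√s)⁻¹) := by
  simp only [K, rpow_neg_half_eq_inv_sqrt, one_div]
  congr 2 <;> split_ifs with h
  · rfl
  · rw [sqrt_eq_zero_of_nonpos (by linarith), inv_zero]
  · rfl
  · rw [sqrt_eq_zero_of_nonpos (by linarith), inv_zero]

lemma K_mul_mul {a : ℝ} (ha : 0 < a) (s r : ℝ) : K (a * s) (a * r) = (√a)⁻¹ * K s r := by
  simp only [K_eq, ← mul_sub, sqrt_mul ha.le, mul_inv]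
  ring

lemma U_mul_mul {a : ℝ} (ha : 0 < a) (s : ℝ) {t : ℝ} (ht : 0 ≤ t) :
    U (a * s) (a * t) = (√a)⁻¹ * U s t := by
  have hK : ∀ r, K (a * s) (a * r) = (√a)⁻¹ * K s r := K_mul_mul ha s
  have hsub := intervalIntegral.integral_comp_mul_left (fun r => K (a * s) r) ha.ne'
    (a := t) (b := 2 * t)
  simp only [hK, intervalIntegral.integral_const_mul, smul_eq_mul] at hsub
  simp only [U, integral_Icc_eq_integral_Ioc,
    ← intervalIntegral.integral_of_le (by linarith : t ≤ 2 * t),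
    ← intervalIntegral.integral_of_le (by nlinarith : a * t ≤ 2 * (a * t))]
  rw [show 2 * (a * t) = a * (2 * t) by ring,
    ← mul_inv_cancel_left₀ ha.ne' (∫ x in a * t..a * (2 * t), K (a * s) x), ← hsub]
  field_simp

lemma Q_mul_mul {a : ℝ} (ha : 0 < a) (s : ℝ) {t : ℝ} (ht : 0 ≤ t) :
    Q (a * s) (a * t) = (√a)⁻¹ * Q s t := by
  have h := deriv_comp_mul_left (f := fun s' => U s' (a * t)) (c := a) (x := s)
  simp only [U_mul_mul ha _ ht, deriv_const_mul_field', smul_eq_mul] at h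
  rw [Q, Q, show a * s * deriv (fun s' => U s' (a * t)) (a * s)
      = s * (a * deriv (fun s' => U s' (a * t)) (a * s)) by ring, ← h]
  ring

lemma U_one (s : ℝ) : U s 1 = (√π)⁻¹ * (2 * √(s - 1) - 2 * √(s - 2) - (√s)⁻¹) := by
  have hint : IntervalIntegrable (fun r => (√(s - r))⁻¹) volume 1 2 := by
    simpa using (intervalIntegrable_inv_sqrt (s - 1) (s - 2)).comp_sub_left s
  rw [U, integral_Icc_eq_integral_Ioc, mul_one, ← intervalIntegral.integral_of_le one_le_two]
  simp only [K_eq]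
  rw [intervalIntegral.integral_const_mul,
    intervalIntegral.integral_sub hint intervalIntegrable_const,
    intervalIntegral.integral_comp_sub_left (fun x => (√x)⁻¹) s, integral_inv_sqrt,
    intervalIntegral.integral_const, smul_eq_mul]
  ring

lemma Q_one {s : ℝ} (hs : 0 < s) (hs1 : s ≠ 1) (hs2 : s ≠ 2) :
    Q s 1 = (√π)⁻¹ * (s * ((√(s - 1))⁻¹ - (√(s - 2))⁻¹) + (√s)⁻¹ / 2) := by
  have hU : HasDerivAt (fun s' => U s' 1)
      ((√π)⁻¹ * ((√(s - 1))⁻¹ - (√(s - 2))⁻¹ - -(√s)⁻¹ / (2 * s))) s := by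
    simp only [U_one]
    exact (((hasDerivAt_two_mul_sqrt_sub hs1).sub (hasDerivAt_two_mul_sqrt_sub hs2)).sub
      (hasDerivAt_inv_sqrt hs)).const_mul _
  rw [Q, hU.deriv]
  field_simp
  ring

lemma abs_Q_one_le_of_le_three {s : ℝ} (hs : 0 < s) (hs3 : s ≤ 3) (hs1 : s ≠ 1)
    (hs2 : s ≠ 2) :
    |Q s 1| ≤ 3 * (√(s - 1))⁻¹ + 3 * (√(s - 2))⁻¹ + (√s)⁻¹ := by
  have hA : 0 ≤ (√(s - 1))⁻¹ := by positivity
  have hB : 0 ≤ (√(s - 2))⁻¹ := by positivity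
  have hC : 0 ≤ (√s)⁻¹ := by positivity
  rw [Q_one hs hs1 hs2, abs_mul, abs_of_pos (by positivity)]
  refine (mul_le_of_le_one_left (abs_nonneg _) inv_sqrt_pi_le_one).trans (abs_le.mpr ⟨?_, ?_⟩)
  · nlinarith [mul_nonneg (sub_nonneg.mpr hs3) hA, mul_nonneg hs.le hB]
  · nlinarith [mul_nonneg (sub_nonneg.mpr hs3) hB, mul_nonneg hs.le hA]

lemma abs_Q_one_le_of_three_le {s : ℝ} (hs : 3 ≤ s) : |Q s 1| ≤ 16 * s ^ (-(3:ℝ)/2) := by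
  have hQ := Q_one (by linarith) (by linarith) (by linarith)
  rw [rpow_neg_three_halves_eq_inv_sqrt_pow (by linarith)]
  set a := √(s - 2)
  set b := √(s - 1)
  set c := √s
  have ha0 : 0 < a := sqrt_pos.mpr (by linarith)
  have hb0 : 0 < b := sqrt_pos.mpr (by linarith)
  have hc0 : 0 < c := sqrt_pos.mpr (by linarith)
  have ha2 : a ^ 2 = s - 2 := sq_sqrt (by linarith)
  have hb2 : b ^ 2 = s - 1 := sq_sqrt (by linarith)
  have hc2 : c ^ 2 = s := sq_sqrt (by linarith)
  have hab : a ≤ b := sqrt_le_sqrt (by linarith)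
  have hbc : b ≤ c := sqrt_le_sqrt (by linarith)
  have hca : c ≤ 2 * a := by nlinarith
  set D := a * b * (a + b) with hD
  have hD0 : 0 < D := by positivity
  have hDa : 2 * a ^ 3 ≤ D := by nlinarith [mul_le_mul hab hab ha0.le hb0.le]
  have hDc : D ≤ 2 * c ^ 3 := by
    nlinarith [mul_le_mul hab hbc hb0.le hb0.le, mul_le_mul hbc hbc hb0.le hc0.le]
  -- `b⁻¹ - a⁻¹ = -1 / D` because `b² - a² = 1`: this exposes the cancellation of the two terms.
  have hX : s * (b⁻¹ - a⁻¹) + c⁻¹ / 2 = -(2 * c ^ 3 - D) / (2 * c * D) := by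
    rw [eq_div_iff (by positivity)]
    field_simp
    linear_combination (2 * s * c * (a - b)) * hD + (2 * s * c * a * b) * (ha2 - hb2)
      + (2 * a * b * c) * hc2
  have hgap : 2 * c ^ 3 - D ≤ 8 * c := by
    nlinarith [mul_nonneg (sub_nonneg.mpr (hab.trans hbc)) (mul_nonneg hc0.le ha0.le)]
  have hX_le : |s * (b⁻¹ - a⁻¹) + c⁻¹ / 2| ≤ 16 * (c ^ 3)⁻¹ := by
    rw [hX, abs_div, abs_neg, abs_of_nonneg (by linarith), abs_of_pos (by positivity),
      ← div_eq_mul_inv, div_le_div_iff₀ (by positivity) (by positivity)]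
    nlinarith [mul_nonneg (sub_nonneg.mpr hgap) (pow_pos hc0 3).le,
      mul_nonneg (sub_nonneg.mpr (by nlinarith : c ^ 3 ≤ 4 * D)) hc0.le]
  rw [hQ, abs_mul, abs_of_pos (by positivity)]
  exact (mul_le_of_le_one_left (abs_nonneg _) inv_sqrt_pi_le_one).trans hX_le

lemma lintegral_abs_Q_one_lt_top : ∫⁻ s in Ioi 0, ENNReal.ofReal |Q s 1| < ⊤ := by
  have hnear : ∫⁻ s in Ioc 0 3, ENNReal.ofReal |Q s 1| < ⊤ := by
    have h0 : IntegrableOn (fun s => (√s)⁻¹) (Ioc 0 3) := by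
      simpa using integrableOn_inv_sqrt_sub 0 0 3
    refine lt_of_le_of_lt (lintegral_mono_ae ?_)
      (((((integrableOn_inv_sqrt_sub 1 0 3).const_mul 3).add
        ((integrableOn_inv_sqrt_sub 2 0 3).const_mul 3)).add h0).lintegral_lt_top)
    have hae : ∀ᵐ s ∂volume.restrict (Ioc 0 3), s ∉ ({1, 2} : Set ℝ) :=
      (Set.toFinite _).countable.ae_notMem _
    filter_upwards [hae, ae_restrict_mem measurableSet_Ioc] with s hs12 hs
    simp only [mem_insert_iff, mem_singleton_iff, not_or] at hs12
    exact ENNReal.ofReal_le_ofReal (abs_Q_one_le_of_le_three hs.1 hs.2 hs12.1 hs12.2)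
  have htail : ∫⁻ s in Ioi 3, ENNReal.ofReal |Q s 1| < ⊤ := by
    have h : IntegrableOn (fun s : ℝ => 16 * s ^ (-(3:ℝ)/2)) (Ioi 3) :=
      (integrableOn_Ioi_rpow_of_lt (by norm_num) (by norm_num)).const_mul 16
    refine lt_of_le_of_lt (setLIntegral_mono' measurableSet_Ioi fun s hs => ?_)
      h.lintegral_lt_top
    exact ENNReal.ofReal_le_ofReal (abs_Q_one_le_of_three_le (le_of_lt hs))
  rw [← Ioc_union_Ioi_eq_Ioi (by norm_num : (0:ℝ) ≤ 3)]
  exact lt_of_le_of_lt (lintegral_union_le _ _ _) (ENNReal.add_lt_top.mpr ⟨hnear, htail⟩)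

lemma lintegral_abs_Q_eq_sqrt_mul {t : ℝ} (ht : 0 < t) :
    ∫⁻ s in Ioi 0, ENNReal.ofReal |Q s t|
      = ENNReal.ofReal √t * ∫⁻ s in Ioi 0, ENNReal.ofReal |Q s 1| := by
  have hQ : ∀ s,
      ENNReal.ofReal |Q (t * s) t| = ENNReal.ofReal (√t)⁻¹ * ENNReal.ofReal |Q s 1| := by
    intro s
    rw [show Q (t * s) t = (√t)⁻¹ * Q s 1 by simpa using Q_mul_mul ht s zero_le_one, abs_mul,
      abs_of_pos (by positivity), ENNReal.ofReal_mul (by positivity)]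
  rw [lintegral_Ioi_zero_eq_mul_comp_mul_left _ ht]
  simp only [hQ]
  rw [lintegral_const_mul' _ _ ENNReal.ofReal_ne_top, ← mul_assoc, ← ENNReal.ofReal_mul ht.le,
    ← div_eq_mul_inv, div_sqrt]

theorem Q_integral_bound :
    ∃ C : ℝ, 0 < C ∧ ∀ t : ℝ, 0 < t →
      ∫⁻ s in Set.Ioi (0:ℝ), ENNReal.ofReal |Q s t| ≤ ENNReal.ofReal (C * Real.sqrt t) := by
  set M := ∫⁻ s in Ioi 0, ENNReal.ofReal |Q s 1|
  refine ⟨M.toReal + 1, by positivity, fun t ht => ?_⟩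
  rw [lintegral_abs_Q_eq_sqrt_mul ht, ENNReal.ofReal_mul (by positivity), mul_comm]
  gcongr
  exact (ENNReal.le_ofReal_iff_toReal_le lintegral_abs_Q_one_lt_top.ne (by positivity)).mpr
    (by linarith)
end

section
/- For every a, b ≥ 0, Φ(ab) ≤ a Φ(b) + a log(1+a) b, where Φ(a) := ∫_{[0,a]} log(1+t) dt. -/
open MeasureTheory Real

noncomputable def Phi (a : ℝ) : ℝ := ∫ t in (0:ℝ)..a, Real.log (1 + t)

theorem Phi_mul_le (a b : ℝ) (ha : 0 ≤ a) (hb : 0 ≤ b) :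
    Phi (a * b) ≤ a * Phi b + a * Real.log (1 + a) * b := by
  have key : Phi (a * b) = a * ∫ s in (0:ℝ)..b, Real.log (1 + a * s) := by
    rw [Phi, show (0:ℝ) = a * 0 by ring, ← intervalIntegral.smul_integral_comp_mul_left
      (fun t => Real.log (1 + t)) a]
    simp [smul_eq_mul]
  rw [key]
  have hint1 : IntervalIntegrable (fun s => Real.log (1 + a * s)) volume 0 b := by
    apply ContinuousOn.intervalIntegrable
    apply ContinuousOn.log
    · exact (continuous_const.add (continuous_const.mul continuous_id)).continuousOn
    · intro x hx
      rw [Set.uIcc_of_le hb] at hx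
      nlinarith [hx.1]
  have hint2 : IntervalIntegrable (fun s => Real.log (1 + a) + Real.log (1 + s))
      volume 0 b := by
    apply ContinuousOn.intervalIntegrable
    apply ContinuousOn.add continuousOn_const
    apply ContinuousOn.log
    · exact (continuous_const.add continuous_id).continuousOn
    · intro x hx
      rw [Set.uIcc_of_le hb] at hx
      nlinarith [hx.1]
  have h1 : (∫ s in (0:ℝ)..b, Real.log (1 + a * s)) ≤
      ∫ s in (0:ℝ)..b, (Real.log (1 + a) + Real.log (1 + s)) := by
    apply intervalIntegral.integral_mono_on hb hint1 hint2
    intro x hx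
    have hx0 : 0 ≤ x := hx.1
    have h1x : (0:ℝ) < 1 + a * x := by nlinarith
    rw [← Real.log_mul (by positivity) (by positivity)]
    apply Real.log_le_log h1x
    nlinarith
  have h2 : (∫ s in (0:ℝ)..b, (Real.log (1 + a) + Real.log (1 + s)))
      = Real.log (1 + a) * b + Phi b := by
    have hint3 : IntervalIntegrable (fun s : ℝ => Real.log (1 + s)) volume 0 b := by
      apply ContinuousOn.intervalIntegrable
      apply ContinuousOn.log
      · exact (continuous_const.add continuous_id).continuousOn
      · intro x hx
        rw [Set.uIcc_of_le hb] at hx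
        nlinarith [hx.1]
    rw [intervalIntegral.integral_add intervalIntegrable_const hint3]
    simp [Phi, mul_comm]
  calc a * ∫ s in (0:ℝ)..b, Real.log (1 + a * s)
      ≤ a * (Real.log (1 + a) * b + Phi b) := by
        rw [← h2]; exact mul_le_mul_of_nonneg_left h1 ha
    _ = a * Phi b + a * Real.log (1 + a) * b := by ring
end
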